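/- Let H be a positive-integer random variable with finite second moment, let 0 ≤ ρ⁺ < 1, and set E[H^PR] = (E[H] − ρ⁺)/(1 − ρ⁺). Define the random variable R̃ on positive integers by P(R̃ = m) = P(H = m)/E[H^PR] + P(H > m)/((1 − ρ⁺)E[H^PR]). Then P(R̃ = ·) is a probability distribution and E[R̃] = (E[H]/E[H^PR])(1 + E[H̃]/(1 − ρ⁺)), where E[H̃] = E[H(H−1)]/(2E[H]). -/

import Mathlib

/-!
Both claims reduce to the tail-sum formulas `∑_{m ≥ 0} P(H > m) = E[H]` and
`∑_{m ≥ 0} m P(H > m) = E[H(H-1)]/2`, obtained by summing `g m * p n` over the pairs `m < n`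
first in `m` and then in `n`, or the other way round (Tonelli for a nonnegative double series).
Since `H ≥ 1`, `P(H > 0) = 1`; shifting the index by one, the rest is algebra.
-/

open Finset

theorem hasSum_mul_tsum_tail {f g : ℕ → ℝ} (hf : 0 ≤ f) (hg : 0 ≤ g) (hfs : Summable f)
    (hs : Summable fun n => (∑ m ∈ range n, g m) * f n) :
    HasSum (fun m => g m * ∑' k, f (m + 1 + k)) (∑' n, (∑ m ∈ range n, g m) * f n) := by
  set F : ℕ × ℕ → ℝ := fun x => if x.2 < x.1 then g x.2 * f x.1 else 0
  have hF : 0 ≤ F := fun x => by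
    dsimp only [F]; split_ifs
    · exact mul_nonneg (hg _) (hf _)
    · exact le_rfl
  have row (n : ℕ) : HasSum (fun m => F (n, m)) ((∑ m ∈ range n, g m) * f n) := by
    have hzero : ∀ m ∉ range n, F (n, m) = 0 := fun m hm => by
      simp [F, not_lt.mp (mt mem_range.mpr hm)]
    rw [sum_mul, sum_congr rfl fun m hm => (if_pos (mem_range.mp hm)).symm]
    exact hasSum_sum_of_ne_finset_zero hzero
  have col (m : ℕ) : HasSum (fun n => F (n, m)) (g m * ∑' k, f (m + 1 + k)) := by
    rw [← hasSum_nat_add_iff' (m + 1),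
      sum_eq_zero fun n hn => by simp [F, not_lt.mpr (mem_range_succ_iff.mp hn)], sub_zero]
    have hshift (k : ℕ) : F (k + (m + 1), m) = g m * f (m + 1 + k) := by
      simp only [F]; rw [if_pos (by omega), add_comm k]
    simp only [hshift]
    exact (hfs.comp_injective (add_right_injective (m + 1))).hasSum.mul_left (g m)
  have hFs : Summable F :=
    (summable_prod_of_nonneg hF).2
      ⟨fun n => (row n).summable, by simpa only [(row _).tsum_eq] using hs⟩
  rw [(hFs.hasSum.prod_fiberwise row).tsum_eq, ← (Equiv.prodComm ℕ ℕ).tsum_eq F]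
  exact hFs.prod_symm.hasSum.prod_fiberwise col

theorem hasSum_tsum_tail {f : ℕ → ℝ} (hf : 0 ≤ f) (hfs : Summable f)
    (hs : Summable fun n : ℕ => (n : ℝ) * f n) :
    HasSum (fun m => ∑' k, f (m + 1 + k)) (∑' n : ℕ, (n : ℝ) * f n) := by
  simpa using hasSum_mul_tsum_tail hf (g := 1) (fun _ => zero_le_one) hfs (by simpa using hs)

theorem sum_range_natCast_mul_two {R : Type*} [CommRing R] (n : ℕ) :
    (∑ i ∈ range n, (i : R)) * 2 = n * (n - 1) := by
  induction n with
  | zero => simp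
  | succ n ih => rw [sum_range_succ, add_mul, ih]; push_cast; ring

theorem hasSum_natCast_mul_tsum_tail {f : ℕ → ℝ} (hf : 0 ≤ f) (hfs : Summable f)
    (hs : Summable fun n : ℕ => (n : ℝ) * (n - 1) * f n) :
    HasSum (fun m : ℕ => (m : ℝ) * ∑' k, f (m + 1 + k))
      ((∑' n : ℕ, (n : ℝ) * (n - 1) * f n) / 2) := by
  have hgauss (n : ℕ) : (∑ m ∈ range n, (m : ℝ)) * f n = (n : ℝ) * (n - 1) * f n / 2 := by
    rw [← sum_range_natCast_mul_two]; ring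
  have := hasSum_mul_tsum_tail hf (g := fun m => (m : ℝ)) (fun m => m.cast_nonneg) hfs
    (by simpa only [hgauss] using hs.div_const 2)
  simpa only [hgauss, tsum_div_const] using this

section ShiftedTails

variable {p : ℕ → ℝ} {μ : ℝ}

theorem one_le_of_hasSum_natCast_mul (hp0 : p 0 = 0) (hpnn : 0 ≤ p) (hp : HasSum p 1)
    (hμ : HasSum (fun n : ℕ => (n : ℝ) * p n) μ) : 1 ≤ μ :=
  hasSum_le (fun n => by
    rcases n with _ | n
    · simp [hp0]
    · exact le_mul_of_one_le_left (hpnn _) (by simp)) hp hμ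

theorem hasSum_tsum_tail_succ (hp0 : p 0 = 0) (hpnn : 0 ≤ p) (hp : HasSum p 1)
    (hμ : HasSum (fun n : ℕ => (n : ℝ) * p n) μ) :
    HasSum (fun m => ∑' k, p (m + 1 + 1 + k)) (μ - 1) := by
  have htail0 : ∑' k, p (0 + 1 + k) = 1 := by
    have := (hasSum_nat_add_iff' 1).2 hp
    simp only [range_one, sum_singleton, hp0, sub_zero] at this
    rw [← this.tsum_eq]
    exact tsum_congr fun k => by rw [zero_add, add_comm]
  have := (hasSum_nat_add_iff' 1).2 (hasSum_tsum_tail hpnn hp.summable hμ.summable)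
  simpa only [range_one, sum_singleton, htail0, hμ.tsum_eq] using this

theorem hasSum_natCast_succ_mul_tsum_tail_succ (hpnn : 0 ≤ p) (hps : Summable p)
    (hs : Summable fun n : ℕ => (n : ℝ) * (n - 1) * p n) :
    HasSum (fun m : ℕ => ((m : ℝ) + 1) * ∑' k, p (m + 1 + 1 + k))
      ((∑' n : ℕ, (n : ℝ) * (n - 1) * p n) / 2) := by
  simpa using (hasSum_nat_add_iff' 1).2 (hasSum_natCast_mul_tsum_tail hpnn hps hs)

end ShiftedTails

theorem stmt_8_general (p : ℕ → ℝ) (hp0 : p 0 = 0) (hpnn : ∀ n, 0 ≤ p n)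
    (hsum : ∑' n : ℕ, p n = 1)
    (hmean : Summable (fun n : ℕ => (n : ℝ) * p n))
    (hmom2 : Summable (fun n : ℕ => (n : ℝ) ^ 2 * p n))
    (EH : ℝ) (hEH : EH = ∑' n : ℕ, (n : ℝ) * p n)
    (ρ : ℝ) (hρ1 : ρ < 1)
    (EHPR : ℝ) (hEHPR : EHPR = (EH - ρ) / (1 - ρ))
    (t : ℕ → ℝ) (ht : ∀ m : ℕ, t m = ∑' k : ℕ, p (m + 1 + k))
    (r : ℕ → ℝ) (hr : ∀ m : ℕ, r m = p m / EHPR + t m / ((1 - ρ) * EHPR))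
    (EHt : ℝ) (hEHt : EHt = (∑' n : ℕ, (n : ℝ) * ((n : ℝ) - 1) * p n) / (2 * EH)) :
    (∑' m : ℕ, r (m + 1) = 1) ∧
      ∑' m : ℕ, ((m : ℝ) + 1) * r (m + 1) = (EH / EHPR) * (1 + EHt / (1 - ρ)) := by
  have hp : HasSum p 1 := by
    have hps : Summable p := by
      by_contra h
      simp [tsum_eq_zero_of_not_summable h] at hsum
    exact hsum ▸ hps.hasSum
  have hEH_sum : HasSum (fun n : ℕ => (n : ℝ) * p n) EH := hEH ▸ hmean.hasSum
  have hEH1 : 1 ≤ EH := one_le_of_hasSum_natCast_mul hp0 hpnn hp hEH_sum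
  have hρ : 1 - ρ ≠ 0 := by linarith
  have hEHρ : EH - ρ ≠ 0 := by linarith
  have hEHPR0 : EHPR ≠ 0 := hEHPR ▸ div_ne_zero hEHρ hρ
  have hp_succ : HasSum (fun m => p (m + 1)) 1 := by
    simpa [hp0] using (hasSum_nat_add_iff' 1).2 hp
  have hEH_succ : HasSum (fun m : ℕ => ((m : ℝ) + 1) * p (m + 1)) EH := by
    simpa using (hasSum_nat_add_iff' 1).2 hEH_sum
  have ht_succ : HasSum (fun m => t (m + 1)) (EH - 1) := by
    simpa only [ht] using hasSum_tsum_tail_succ hp0 hpnn hp hEH_sum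
  have hmt_succ : HasSum (fun m : ℕ => ((m : ℝ) + 1) * t (m + 1)) (EHt * EH) := by
    have hfactorial : Summable fun n : ℕ => (n : ℝ) * (n - 1) * p n :=
      (hmom2.sub hmean).congr fun n => by ring
    convert hasSum_natCast_succ_mul_tsum_tail_succ hpnn hp.summable hfactorial using 1
    · simp only [ht]
    · rw [hEHt]; field_simp
  constructor
  · rw [tsum_congr fun m => hr (m + 1),
      ((hp_succ.div_const EHPR).add (ht_succ.div_const ((1 - ρ) * EHPR))).tsum_eq, hEHPR]
    field_simp
    ring
  · have hmean_r := (hEH_succ.div_const EHPR).add (hmt_succ.div_const ((1 - ρ) * EHPR))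
    rw [(hmean_r.congr_fun fun m => by rw [hr]; ring).tsum_eq]
    field_simp

/-- the remaining-service-time distribution
`P(R̃ = m) = P(H = m)/E[H^PR] + P(H > m)/((1 − ρ⁺)E[H^PR])` on positive integers
is a probability distribution with mean
`(E[H]/E[H^PR])(1 + E[H̃]/(1 − ρ⁺))`, where `E[H^PR] = (E[H] − ρ⁺)/(1 − ρ⁺)`
and `E[H̃] = E[H(H−1)]/(2E[H])`. -/
theorem stmt_8 (p : ℕ → ℝ) (hp0 : p 0 = 0) (hpnn : ∀ n, 0 ≤ p n)
    (hsum : ∑' n : ℕ, p n = 1)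
    (hmean : Summable (fun n : ℕ => (n : ℝ) * p n))
    (hmom2 : Summable (fun n : ℕ => (n : ℝ) ^ 2 * p n))
    (EH : ℝ) (hEH : EH = ∑' n : ℕ, (n : ℝ) * p n) (hEHpos : 0 < EH)
    (ρ : ℝ) (hρ0 : 0 ≤ ρ) (hρ1 : ρ < 1)
    (EHPR : ℝ) (hEHPR : EHPR = (EH - ρ) / (1 - ρ))
    (t : ℕ → ℝ) (ht : ∀ m : ℕ, t m = ∑' k : ℕ, p (m + 1 + k))
    (r : ℕ → ℝ) (hr : ∀ m : ℕ, r m = p m / EHPR + t m / ((1 - ρ) * EHPR))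
    (EHt : ℝ) (hEHt : EHt = (∑' n : ℕ, (n : ℝ) * ((n : ℝ) - 1) * p n) / (2 * EH)) :
    (∑' m : ℕ, r (m + 1) = 1) ∧
      ∑' m : ℕ, ((m : ℝ) + 1) * r (m + 1) = (EH / EHPR) * (1 + EHt / (1 - ρ)) :=
  stmt_8_general p hp0 hpnn hsum hmean hmom2 EH hEH ρ hρ1 EHPR hEHPR t ht r hr EHt hEHt
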